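/- Let q > n, let Ω ⊆ ℝ^n be open, and let φ_k : Ω → ℝ^{m_k+1}, k = 1, …, q, be smooth maps that are nowhere zero on Ω; set ψ_k(x) := φ_k(x)/‖φ_k(x)‖ and ψ = (ψ_1, …, ψ_q). Assume that for all x ∈ Ω the derivative D_x ψ has rank n. Consider the random overdetermined system f_k = ∑_{i=0}^{m_k} c_{k,i} φ_{k,i}, k = 1, …, q, where the c_{k,i} are i.i.d. standard Gaussian random variables. Then with probability one Z(f, Ω) = ∅, i.e., almost surely the system f_1(x) = ⋯ = f_q(x) = 0 has no solution in Ω. -/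

import Mathlib

open MeasureTheory ProbabilityTheory

universe u

section AuxMeasure
/-- Absolute continuity is preserved by finite products of sigma-finite measures. -/
theorem measure_pi_fin_absolutelyContinuous (N : ℕ) :
    ∀ {α : Fin N → Type u} [inst : ∀ i, MeasurableSpace (α i)]
      (μ ν : ∀ i, Measure (α i)) [∀ i, SigmaFinite (μ i)] [∀ i, SigmaFinite (ν i)],
      (∀ i, μ i ≪ ν i) → Measure.pi μ ≪ Measure.pi ν := by
  induction N with
  | zero =>
    intro α inst μ ν hμ hν h
    rw [Measure.pi_of_empty μ, Measure.pi_of_empty ν]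
  | succ N ih =>
    intro α inst μ ν hμ hν h
    have hμp := measurePreserving_piFinSuccAbove μ 0
    have hνp := measurePreserving_piFinSuccAbove ν 0
    rw [← (hμp.symm _).map_eq, ← (hνp.symm _).map_eq]
    exact ((h 0).prod (ih _ _ fun j => h _)).map
      (MeasurableEquiv.piFinSuccAbove α 0).symm.measurable

open Module in
/-- The image of a differentiable map from a space of strictly smaller dimension is null. -/
theorem image_null_of_finrank_lt {F E : Type*} [NormedAddCommGroup F] [NormedSpace ℝ F]
    [NormedAddCommGroup E] [NormedSpace ℝ E] [FiniteDimensional ℝ F] [FiniteDimensional ℝ E]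
    [MeasurableSpace E] [BorelSpace E] (μ : Measure E) [μ.IsAddHaarMeasure]
    (h : finrank ℝ F < finrank ℝ E) (U : Set F) {f : F → E}
    (hf : DifferentiableOn ℝ f U) : μ (f '' U) = 0 := by
  set a := finrank ℝ F with ha
  set t := finrank ℝ E with ht
  let bF := Module.finBasis ℝ F
  let bE := Module.finBasis ℝ E
  let j0 : (Fin a → ℝ) →ₗ[ℝ] (Fin t → ℝ) :=
    LinearMap.pi (fun i => if hi : (i : ℕ) < a then LinearMap.proj (⟨i, hi⟩ : Fin a) else 0)
  let π0 : (Fin t → ℝ) →ₗ[ℝ] (Fin a → ℝ) :=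
    LinearMap.pi (fun i => LinearMap.proj (Fin.castLE h.le i))
  let j : F →ₗ[ℝ] E := (bE.equivFun.symm : (Fin t → ℝ) ≃ₗ[ℝ] E).toLinearMap ∘ₗ j0 ∘ₗ
    (bF.equivFun : F ≃ₗ[ℝ] (Fin a → ℝ)).toLinearMap
  let π : E →ₗ[ℝ] F := (bF.equivFun.symm : (Fin a → ℝ) ≃ₗ[ℝ] F).toLinearMap ∘ₗ π0 ∘ₗ
    (bE.equivFun : E ≃ₗ[ℝ] (Fin t → ℝ)).toLinearMap
  have hπ0j0 : ∀ w : Fin a → ℝ, π0 (j0 w) = w := by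
    intro w; funext i
    simp only [π0, j0, LinearMap.pi_apply, LinearMap.proj_apply]
    rw [dif_pos (show ((Fin.castLE h.le i : Fin t) : ℕ) < a from i.isLt)]
    exact congrArg w (Fin.ext (by simp))
  have hπj : ∀ y, π (j y) = y := by
    intro y
    simp only [π, j, LinearMap.coe_comp, Function.comp_apply, LinearEquiv.coe_coe,
      LinearEquiv.symm_apply_apply, LinearEquiv.apply_symm_apply, hπ0j0]
  have hp : LinearMap.range j ≠ ⊤ := by
    intro hp
    have h1 : finrank ℝ (LinearMap.range j) = t := by rw [hp]; exact finrank_top ℝ E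
    have h2 : finrank ℝ (LinearMap.range j) ≤ a := LinearMap.finrank_range_le j
    omega
  set s : Set E := (π ⁻¹' U) ∩ (LinearMap.range j : Submodule ℝ E) with hs
  have hs0 : μ s = 0 :=
    measure_mono_null Set.inter_subset_right (μ.addHaar_submodule _ hp)
  have hπdiff : Differentiable ℝ (π : E → F) :=
    (LinearMap.toContinuousLinearMap π).differentiable
  have hg : DifferentiableOn ℝ (f ∘ π) s :=
    hf.comp hπdiff.differentiableOn (fun x hx => hx.1)
  have himg : f '' U ⊆ (f ∘ π) '' s := by
    rintro _ ⟨y, hy, rfl⟩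
    refine ⟨j y, ⟨?_, ⟨y, rfl⟩⟩, ?_⟩
    · show π (j y) ∈ U; rw [hπj]; exact hy
    · show f (π (j y)) = f y; rw [hπj]
  exact measure_mono_null himg
    (addHaar_image_eq_zero_of_differentiableOn_of_addHaar_eq_zero μ hg hs0)

end AuxMeasure

section AuxGeometry
open Module
variable {q : ℕ} {m : Fin q → ℕ}
/-- The linear constraint map `c ↦ (⟨c_k, u_k⟩)_k`. -/
noncomputable def constraintMap (u : (k : Fin q) → EuclideanSpace ℝ (Fin (m k + 1))) :
    ((k : Fin q) → Fin (m k + 1) → ℝ) →ₗ[ℝ] (Fin q → ℝ) where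
  toFun c := fun k => ∑ i, c k i * u k i
  map_add' a b := by
    funext k
    simp [add_mul, Finset.sum_add_distrib]
  map_smul' r a := by
    funext k
    simp [Finset.mul_sum, mul_assoc]

/-- The blockwise orthogonal projection onto the complement of the `u_k`. -/
noncomputable def projMap (u : (k : Fin q) → EuclideanSpace ℝ (Fin (m k + 1))) :
    ((k : Fin q) → Fin (m k + 1) → ℝ) →ₗ[ℝ] ((k : Fin q) → Fin (m k + 1) → ℝ) where
  toFun c := fun k i => c k i - (∑ j, c k j * u k j) * u k i
  map_add' a b := by
    funext k i
    simp only [Pi.add_apply, add_mul, Finset.sum_add_distrib]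
    ring
  map_smul' r a := by
    funext k i
    simp only [Pi.smul_apply, smul_eq_mul, RingHom.id_apply]
    have : (∑ j, r * a k j * u k j) = r * ∑ j, a k j * u k j := by
      rw [Finset.mul_sum]; exact Finset.sum_congr rfl fun j _ => by ring
    rw [this]; ring

theorem constraintMap_apply (u : (k : Fin q) → EuclideanSpace ℝ (Fin (m k + 1)))
    (c : (k : Fin q) → Fin (m k + 1) → ℝ) (k : Fin q) :
    constraintMap u c k = ∑ i, c k i * u k i := rfl

theorem projMap_apply (u : (k : Fin q) → EuclideanSpace ℝ (Fin (m k + 1)))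
    (c : (k : Fin q) → Fin (m k + 1) → ℝ) (k : Fin q) (i : Fin (m k + 1)) :
    projMap u c k i = c k i - (∑ j, c k j * u k j) * u k i := rfl

theorem constraintMap_surjective (u : (k : Fin q) → EuclideanSpace ℝ (Fin (m k + 1)))
    (hu : ∀ k, ∑ i, u k i * u k i = 1) : Function.Surjective (constraintMap u) := by
  intro t
  refine ⟨fun k i => t k * u k i, ?_⟩
  funext k
  rw [constraintMap_apply]
  have : ∑ i, t k * u k i * u k i = t k * ∑ i, u k i * u k i := by
    rw [Finset.mul_sum]; exact Finset.sum_congr rfl fun i _ => by ring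
  rw [this, hu k, mul_one]

theorem constraintMap_projMap (u : (k : Fin q) → EuclideanSpace ℝ (Fin (m k + 1)))
    (hu : ∀ k, ∑ i, u k i * u k i = 1) (c : (k : Fin q) → Fin (m k + 1) → ℝ) :
    constraintMap u (projMap u c) = 0 := by
  funext k
  rw [constraintMap_apply]
  have h1 : ∀ i, projMap u c k i * u k i
      = c k i * u k i - (∑ j, c k j * u k j) * (u k i * u k i) := by
    intro i; rw [projMap_apply]; ring
  rw [Finset.sum_congr rfl fun i _ => h1 i, Finset.sum_sub_distrib, ← Finset.mul_sum, hu k,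
    mul_one, sub_self, Pi.zero_apply]

open Module in
theorem finrank_ker_constraintMap (u : (k : Fin q) → EuclideanSpace ℝ (Fin (m k + 1)))
    (hu : ∀ k, ∑ i, u k i * u k i = 1) :
    finrank ℝ (LinearMap.ker (constraintMap u)) + q
      = finrank ℝ ((k : Fin q) → Fin (m k + 1) → ℝ) := by
  have h1 := LinearMap.finrank_range_add_finrank_ker (constraintMap u)
  have h2 : LinearMap.range (constraintMap u) = ⊤ :=
    LinearMap.range_eq_top.mpr (constraintMap_surjective u hu)
  rw [h2, finrank_top, Module.finrank_fin_fun] at h1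
  omega

theorem euclid_inner_sum {N : ℕ} (x y : EuclideanSpace ℝ (Fin N)) :
    (inner ℝ x y : ℝ) = ∑ i, x i * y i := by
  simp [PiLp.inner_apply, RCLike.inner_apply, mul_comm]

/-- Key injectivity computation. -/
theorem vanish_of_proj_eq_zero {N : ℕ} (v u u₀ : EuclideanSpace ℝ (Fin N))
    (h0 : ∑ i, v i * u₀ i = 0)
    (hv : ∀ i, v i = (∑ j, v j * u j) * u i) (hclose : ‖u - u₀‖ ≤ 1/2) : v = 0 := by
  set S : ℝ := ∑ j, v j * u j with hSdef
  have hS : S = (inner ℝ v (u - u₀) : ℝ) := by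
    rw [euclid_inner_sum]
    have : ∀ i, v i * (u - u₀) i = v i * u i - v i * u₀ i := by
      intro i; simp [PiLp.sub_apply]; ring
    rw [Finset.sum_congr rfl fun i _ => this i, Finset.sum_sub_distrib, h0, sub_zero]
  have habs : |S| ≤ ‖v‖ * (1/2) := by
    rw [hS]
    calc |(inner ℝ v (u - u₀) : ℝ)| ≤ ‖v‖ * ‖u - u₀‖ := abs_real_inner_le_norm v (u - u₀)
      _ ≤ ‖v‖ * (1/2) := by
        exact mul_le_mul_of_nonneg_left hclose (norm_nonneg v)
  have hnorm : ‖v‖ ^ 2 = S ^ 2 := by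
    have h2 : (inner ℝ v v : ℝ) = S * S := by
      rw [euclid_inner_sum]
      have : ∀ i, v i * v i = S * (v i * u i) := by
        intro i; rw [hv i]; ring
      rw [Finset.sum_congr rfl fun i _ => this i, ← Finset.mul_sum, ← hSdef]
    rw [← real_inner_self_eq_norm_sq, h2]; ring
  have : ‖v‖ = 0 := by nlinarith [norm_nonneg v, sq_abs S, abs_nonneg S]
  exact norm_eq_zero.mp this

set_option maxHeartbeats 2000000 in
/-- On a small ball, the set of coefficient vectors `c` annihilated somewhere is null. -/
theorem ball_solution_set_null {n : ℕ} (hqn : n < q)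
    (u : (Fin n → ℝ) → (k : Fin q) → EuclideanSpace ℝ (Fin (m k + 1)))
    (x₀ : Fin n → ℝ) (r : ℝ) (hr : 0 < r)
    (hunit : ∀ x ∈ Metric.ball x₀ r, ∀ k, ∑ i, u x k i * u x k i = 1)
    (hclose : ∀ x ∈ Metric.ball x₀ r, ∀ k, ‖u x k - u x₀ k‖ ≤ 1/2)
    (hdiff : ∀ k i, DifferentiableOn ℝ (fun x => u x k i) (Metric.ball x₀ r)) :
    volume {c : (k : Fin q) → Fin (m k + 1) → ℝ |
      ∃ x ∈ Metric.ball x₀ r, constraintMap (u x) c = 0} = 0 := by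
  classical
  set C := ((k : Fin q) → Fin (m k + 1) → ℝ)
  have hx₀ : x₀ ∈ Metric.ball x₀ r := Metric.mem_ball_self hr
  set V₀ := LinearMap.ker (constraintMap (u x₀)) with hV₀
  set d := finrank ℝ V₀ with hd
  let e : Basis (Fin d) ℝ V₀ := Module.finBasis ℝ V₀
  set U : Set ((Fin n → ℝ) × (Fin d → ℝ)) := Metric.ball x₀ r ×ˢ Set.univ with hU
  let G : (Fin n → ℝ) × (Fin d → ℝ) → C := fun p => projMap (u p.1) (∑ j, p.2 j • (e j : C))
  -- coverage
  have hcov : {c : C | ∃ x ∈ Metric.ball x₀ r, constraintMap (u x) c = 0} ⊆ G '' U := by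
    rintro c ⟨x, hx, hc⟩
    have hmaps : ∀ v ∈ V₀, projMap (u x) v ∈ LinearMap.ker (constraintMap (u x)) := fun v _ =>
      LinearMap.mem_ker.mpr (by rw [constraintMap_projMap (u x) (hunit x hx)])
    set T := (projMap (u x)).restrict hmaps with hT
    have hinj : Function.Injective T := by
      rw [← LinearMap.ker_eq_bot]
      rw [LinearMap.ker_eq_bot']
      intro v hv
      have hvz : projMap (u x) (v : C) = 0 := congrArg Subtype.val hv
      have hcoe : (v : C) = 0 := by
        funext k
        refine congrArg WithLp.ofLp (vanish_of_proj_eq_zero (WithLp.toLp 2 ((v : C) k)) (u x k) (u x₀ k) ?_ ?_ (hclose x hx k))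
        · have hv0 := v.2
          rw [LinearMap.mem_ker] at hv0
          have := congrFun hv0 k
          rwa [constraintMap_apply] at this
        · intro i
          show (v : C) k i = (∑ j, (v : C) k j * u x k j) * u x k i
          have := congrFun (congrFun hvz k) i
          rw [projMap_apply] at this
          have h2 : (0 : C) k i = 0 := rfl
          rw [h2] at this
          linarith
      exact Subtype.ext hcoe
    have hfr : finrank ℝ V₀ = finrank ℝ (LinearMap.ker (constraintMap (u x))) := by
      have h1 := finrank_ker_constraintMap (u x₀) (hunit x₀ hx₀)
      have h2 := finrank_ker_constraintMap (u x) (hunit x hx)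
      rw [← hV₀] at h1
      omega
    have hsurj := (LinearMap.injective_iff_surjective_of_finrank_eq_finrank hfr).mp hinj
    obtain ⟨v, hv⟩ := hsurj ⟨c, LinearMap.mem_ker.mpr hc⟩
    refine ⟨(x, fun j => e.repr v j), ⟨hx, Set.mem_univ _⟩, ?_⟩
    show projMap (u x) (∑ j, (e.repr v j : ℝ) • (e j : C)) = c
    have hsum : (∑ j, (e.repr v j : ℝ) • (e j : C)) = (v : C) := by
      have : ((∑ j, e.repr v j • e j : V₀) : C) = ∑ j, (e.repr v j : ℝ) • (e j : C) := by
        push_cast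
        rfl
      rw [← this, e.sum_repr v]
    rw [hsum]
    exact congrArg Subtype.val hv
  refine measure_mono_null hcov (image_null_of_finrank_lt volume ?_ U ?_)
  · -- dimension count
    have h1 := finrank_ker_constraintMap (u x₀) (hunit x₀ hx₀)
    rw [← hV₀, ← hd] at h1
    have h2 : finrank ℝ ((Fin n → ℝ) × (Fin d → ℝ)) = n + d := by
      rw [Module.finrank_prod, Module.finrank_fin_fun, Module.finrank_fin_fun]
    rw [h2]
    omega
  · -- differentiability
    apply differentiableOn_pi.mpr
    intro k
    apply differentiableOn_pi.mpr
    intro i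
    have hG : ∀ p : (Fin n → ℝ) × (Fin d → ℝ), G p k i
        = (∑ j, p.2 j * (e j : C) k i)
          - (∑ jj, (∑ j, p.2 j * (e j : C) k jj) * u p.1 k jj) * u p.1 k i := by
      intro p
      show projMap (u p.1) _ k i = _
      rw [projMap_apply]
      have hs : ∀ jj : Fin (m k + 1), (∑ j, p.2 j • (e j : C)) k jj
          = ∑ j, p.2 j * (e j : C) k jj := by
        intro jj
        simp [Finset.sum_apply]
      rw [hs i]
      congr 1
      refine congrArg (· * u p.1 k i) ?_
      exact Finset.sum_congr rfl fun jj _ => by rw [hs jj]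
    have hvj : ∀ jj : Fin (m k + 1), Differentiable ℝ
        (fun p : (Fin n → ℝ) × (Fin d → ℝ) => ∑ j, p.2 j * (e j : C) k jj) := by
      intro jj
      apply Differentiable.fun_sum
      intro j _
      have h1 : Differentiable ℝ (fun p : (Fin n → ℝ) × (Fin d → ℝ) => p.2 j) :=
        differentiable_pi.mp differentiable_snd j
      exact h1.mul (differentiable_const _)
    have hujj : ∀ jj : Fin (m k + 1), DifferentiableOn ℝ
        (fun p : (Fin n → ℝ) × (Fin d → ℝ) => u p.1 k jj) U := by
      intro jj
      exact (hdiff k jj).comp differentiable_fst.differentiableOn (fun p hp => hp.1)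
    have hmain : DifferentiableOn ℝ (fun p : (Fin n → ℝ) × (Fin d → ℝ) =>
        (∑ j, p.2 j * (e j : C) k i)
          - (∑ jj, (∑ j, p.2 j * (e j : C) k jj) * u p.1 k jj) * u p.1 k i) U :=
      ((hvj i).differentiableOn).sub
        ((DifferentiableOn.mul (DifferentiableOn.fun_sum fun jj _ =>
          ((hvj jj).differentiableOn).mul (hujj jj)) (hujj i)))
    exact hmain.congr (fun p _ => hG p)

end AuxGeometry

/-- The random overdetermined system `f_k = ∑_i c_{k,i} φ_{k,i}`, `k = 1, …, q`. -/
noncomputable def gaussianLinearComboSystem {n q : ℕ} {m : Fin q → ℕ}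
    (φ : (k : Fin q) → (Fin n → ℝ) → EuclideanSpace ℝ (Fin (m k + 1)))
    (c : (k : Fin q) → Fin (m k + 1) → ℝ) (x : Fin n → ℝ) : Fin q → ℝ :=
  fun k => ∑ i, c k i * φ k x i

theorem overdetermined_no_zeros_almost_surely
    (n q : ℕ) (hqn : n < q) (Ω : Set (Fin n → ℝ)) (hΩ : IsOpen Ω) (m : Fin q → ℕ)
    (φ : (k : Fin q) → (Fin n → ℝ) → EuclideanSpace ℝ (Fin (m k + 1)))
    (hφ : ∀ k, ContDiffOn ℝ (⊤ : ℕ∞) (φ k) Ω)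
    (hφ0 : ∀ k, ∀ x ∈ Ω, φ k x ≠ 0)
    (ψ : (Fin n → ℝ) → (k : Fin q) → EuclideanSpace ℝ (Fin (m k + 1)))
    (hψ : ψ = fun x k => ‖φ k x‖⁻¹ • φ k x)
    (hrank : ∀ x ∈ Ω,
      LinearMap.rank ((fderiv ℝ ψ x :
        (Fin n → ℝ) →ₗ[ℝ] ((k : Fin q) → EuclideanSpace ℝ (Fin (m k + 1))))) = n) :
    ∀ᵐ c ∂(Measure.pi fun k : Fin q => Measure.pi fun _ : Fin (m k + 1) =>
        gaussianReal 0 1),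
      {x | x ∈ Ω ∧ gaussianLinearComboSystem φ c x = 0} = ∅ := by
  classical
  set C := ((k : Fin q) → Fin (m k + 1) → ℝ)
  -- absolute continuity w.r.t. Lebesgue
  have hgauss : (gaussianReal 0 1 : Measure ℝ) ≪ (volume : Measure ℝ) := by
    rw [gaussianReal_of_var_ne_zero 0 one_ne_zero]
    exact withDensity_absolutelyContinuous _ _
  have hac : (Measure.pi fun k : Fin q => Measure.pi fun _ : Fin (m k + 1) =>
      gaussianReal 0 1) ≪ (volume : Measure C) := by
    have : (volume : Measure C) = Measure.pi fun k : Fin q =>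
        Measure.pi fun _ : Fin (m k + 1) => (volume : Measure ℝ) := rfl
    rw [this]
    exact measure_pi_fin_absolutelyContinuous q _ _ fun k =>
      measure_pi_fin_absolutelyContinuous (m k + 1) _ _ fun i => hgauss
  rw [ae_iff]
  apply hac
  -- facts about ψ
  have hψunit : ∀ x ∈ Ω, ∀ k, ∑ i, ψ x k i * ψ x k i = 1 := by
    intro x hx k
    have h1 : ‖ψ x k‖ = 1 := by
      rw [hψ]
      simp only
      rw [norm_smul, norm_inv, norm_norm, inv_mul_cancel₀ (norm_ne_zero_iff.mpr (hφ0 k x hx))]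
    have h2 := euclid_inner_sum (ψ x k) (ψ x k)
    rw [real_inner_self_eq_norm_sq, h1] at h2
    rw [← h2]; norm_num
  have hcont : ∀ k, ContinuousOn (fun y => ψ y k) Ω := by
    intro k
    rw [hψ]
    exact (((hφ k).continuousOn.norm).inv₀
      (fun x hx => norm_ne_zero_iff.mpr (hφ0 k x hx))).smul (hφ k).continuousOn
  have hψdiff : ∀ k i, DifferentiableOn ℝ (fun x => ψ x k i) Ω := by
    intro k i
    have hφd : DifferentiableOn ℝ (φ k) Ω := (hφ k).differentiableOn (by simp)
    have hn : DifferentiableOn ℝ (fun x => ‖φ k x‖⁻¹) Ω :=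
      (hφd.norm ℝ (fun x hx => hφ0 k x hx)).inv
        (fun x hx => norm_ne_zero_iff.mpr (hφ0 k x hx))
    have hci : DifferentiableOn ℝ (fun x => φ k x i) Ω :=
      ((EuclideanSpace.proj i : EuclideanSpace ℝ (Fin (m k + 1)) →L[ℝ] ℝ)
        ).differentiable.comp_differentiableOn hφd
    have : DifferentiableOn ℝ (fun x => ‖φ k x‖⁻¹ * φ k x i) Ω := hn.mul hci
    apply this.congr
    intro x _
    rw [hψ]
    rfl
  -- choice of small balls
  have hball : ∀ x₀ ∈ Ω, ∃ r > 0, Metric.ball x₀ r ⊆ Ω ∧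
      ∀ y ∈ Metric.ball x₀ r, ∀ k, ‖ψ y k - ψ x₀ k‖ ≤ 1/2 := by
    intro x₀ hx₀
    have hWopen : IsOpen (⋂ k, Ω ∩ (fun y => ψ y k) ⁻¹' Metric.ball (ψ x₀ k) (1/2)) :=
      isOpen_iInter_of_finite fun k =>
        (hcont k).isOpen_inter_preimage hΩ Metric.isOpen_ball
    have hWmem : x₀ ∈ ⋂ k, Ω ∩ (fun y => ψ y k) ⁻¹' Metric.ball (ψ x₀ k) (1/2) := by
      refine Set.mem_iInter.mpr fun k => ⟨hx₀, ?_⟩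
      simp [Metric.mem_ball]
    obtain ⟨r, hrpos, hrball⟩ := Metric.isOpen_iff.mp hWopen x₀ hWmem
    refine ⟨r, hrpos, ?_, ?_⟩
    · intro y hy
      exact ((Set.mem_iInter.mp (hrball hy)) ⟨0, lt_of_le_of_lt (Nat.zero_le n) hqn⟩).1
    · intro y hy k
      have := ((Set.mem_iInter.mp (hrball hy)) k).2
      rw [Set.mem_preimage, Metric.mem_ball, dist_eq_norm] at this
      linarith
  choose! r hrpos hrΩ hrclose using hball
  obtain ⟨s', hs'Ω, hs'c, hs'cov⟩ := TopologicalSpace.countable_cover_nhdsWithin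
    (f := fun x₀ => Metric.ball x₀ (r x₀)) (s := Ω)
    (fun x hx => mem_nhdsWithin_of_mem_nhds (Metric.ball_mem_nhds x (hrpos x hx)))
  apply measure_mono_null (t := ⋃ x₀ ∈ s', {c : C |
      ∃ x ∈ Metric.ball x₀ (r x₀), constraintMap (ψ x) c = 0})
  · -- inclusion
    intro c hc
    change ¬ ({x | x ∈ Ω ∧ gaussianLinearComboSystem φ c x = 0} = ∅) at hc
    rw [Set.eq_empty_iff_forall_notMem] at hc
    push_neg at hc
    obtain ⟨x, hx⟩ := hc
    obtain ⟨hxΩ, hsys⟩ := hx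
    obtain ⟨x₀, hx₀s, hxball⟩ := Set.mem_iUnion₂.mp (hs'cov hxΩ)
    refine Set.mem_iUnion₂.mpr ⟨x₀, hx₀s, x, hxball, ?_⟩
    funext k
    rw [constraintMap_apply]
    have hsysk : ∑ i, c k i * φ k x i = 0 := by
      have := congrFun hsys k
      exact this
    have h1 : ∀ i, ψ x k i = ‖φ k x‖⁻¹ * φ k x i := by
      intro i; rw [hψ]; rfl
    calc ∑ i, c k i * ψ x k i = ∑ i, ‖φ k x‖⁻¹ * (c k i * φ k x i) := by
          refine Finset.sum_congr rfl fun i _ => ?_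
          rw [h1 i]; ring
      _ = ‖φ k x‖⁻¹ * ∑ i, c k i * φ k x i := by rw [Finset.mul_sum]
      _ = 0 := by rw [hsysk, mul_zero]
  · -- nullity of the union
    rw [measure_biUnion_null_iff hs'c]
    intro x₀ hx₀s
    have hx₀Ω : x₀ ∈ Ω := hs'Ω hx₀s
    refine ball_solution_set_null hqn ψ x₀ (r x₀) (hrpos x₀ hx₀Ω) ?_ ?_ ?_
    · intro x hx k; exact hψunit x (hrΩ x₀ hx₀Ω hx) k
    · intro x hx k; exact hrclose x₀ hx₀Ω x hx k
    · intro k i; exact (hψdiff k i).mono (hrΩ x₀ hx₀Ω)
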